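/- Let S be an η-sparse family of dyadic cubes, σ and w weights with σ_{Q'} ≥ 1 for all Q' ∈ S, and 1 < p < ∞. Let ψ : [1,∞) → (0,∞) be increasing with ∫_1^∞ (1/ψ(t)) dt/t < ∞, and set [w,σ]_ν = sup_{Q'} w_{Q'} σ_{Q'}^{p-1} ψ(σ_{Q'}), assumed finite. Then for p ≥ 2 and any Q ∈ S: ∑_{Q' ∈ S, Q' ⊆ Q, σ_{Q'} > σ_Q^{1/2}} σ_{Q'} w(Q') ≤ C [w,σ]_ν^{1/(p-1)} ψ(σ_Q^{1/2})^{-1/(p-1)} (w_Q)^{1−1/(p-1)} |Q|, with C depending only on η, p, n. -/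

import Mathlib

open MeasureTheory Set
open scoped ENNReal

noncomputable section

def dyadicCube (n : ℕ) (k : ℤ) (m : Fin n → ℤ) : Set (Fin n → ℝ) :=
  {x | ∀ i, (m i : ℝ) * (2:ℝ) ^ k ≤ x i ∧ x i < ((m i : ℝ) + 1) * (2:ℝ) ^ k}

def IsDyadicCube {n : ℕ} (Q : Set (Fin n → ℝ)) : Prop := ∃ k m, Q = dyadicCube n k m

def IsCube {n : ℕ} (Q : Set (Fin n → ℝ)) : Prop :=
  ∃ (a : Fin n → ℝ) (h : ℝ), 0 < h ∧ Q = {x | ∀ i, a i ≤ x i ∧ x i < a i + h}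

def IsSparse {n : ℕ} (η : ℝ≥0∞) (S : Set (Set (Fin n → ℝ))) : Prop :=
  (∀ Q ∈ S, IsDyadicCube Q) ∧
  ∃ E : Set (Fin n → ℝ) → Set (Fin n → ℝ),
    (∀ Q ∈ S, E Q ⊆ Q ∧ MeasurableSet (E Q) ∧ η * volume Q ≤ volume (E Q)) ∧
    S.PairwiseDisjoint E

def mass {n : ℕ} (w : (Fin n → ℝ) → ℝ≥0∞) (Q : Set (Fin n → ℝ)) : ℝ≥0∞ := ∫⁻ x in Q, w x

def avg {n : ℕ} (w : (Fin n → ℝ) → ℝ≥0∞) (Q : Set (Fin n → ℝ)) : ℝ≥0∞ := mass w Q / volume Q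

def maximalOp {n : ℕ} (f : (Fin n → ℝ) → ℝ≥0∞) (x : Fin n → ℝ) : ℝ≥0∞ :=
  ⨆ (Q : Set (Fin n → ℝ)) (_ : IsCube Q) (_ : x ∈ Q), avg f Q

/-! Since `ψ` is increasing, every cube `Q'` in the sum has
`σ_{Q'}^{p-1} w_{Q'} ≤ [w,σ]_ν / ψ(σ_Q^{1/2})`, hence
`σ_{Q'} w_{Q'} ≤ ([w,σ]_ν / ψ(σ_Q^{1/2}))^{1/(p-1)} w_{Q'}^s` with `s = 1 - 1/(p-1) ∈ [0, 1)`.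
It remains to show `∑_{Q' ⊆ Q} w_{Q'}^s |Q'| ≲ w_Q^s |Q|` for a sparse family. Sort the cubes by
the level `j` with `2^j w_Q ≤ w_{Q'} < 2^{j+1} w_Q`: the maximal cubes with `w_{Q'} ≥ 2^j w_Q`
are disjoint and each carries `w`-mass at least `2^j w_Q` times its volume, so by sparseness the
cubes of level `≥ j` have total volume `≲ 2^{-j} |Q|`, and `∑_j 2^{j(s-1)}` converges. -/

theorem tsum_measure_le_of_pairwiseDisjoint {α ι : Type*} [MeasurableSpace α] (μ : Measure α)
    {T : Set ι} {E : ι → Set α} {B : Set α} (hT : T.PairwiseDisjoint E)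
    (hE : ∀ i ∈ T, MeasurableSet (E i)) (hEB : ∀ i ∈ T, E i ⊆ B) :
    ∑' i : T, μ (E i) ≤ μ B :=
  (tsum_meas_le_meas_iUnion_of_disjoint μ (fun i : T => hE i i.2)
    fun i j hij => hT i.2 j.2 (Subtype.coe_ne_coe.mpr hij)).trans
    (measure_mono (iUnion_subset fun i : T => hEB i i.2))

theorem tsum_subtype_ite {α : Type*} (s : Set α) (p : α → Prop) [DecidablePred p]
    (f : α → ℝ≥0∞) :
    ∑' x : s, (if p x then f x else 0) = ∑' x : {x | x ∈ s ∧ p x}, f x := by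
  rw [tsum_subtype s fun x => if p x then f x else 0, tsum_subtype]
  congr 1
  ext x
  by_cases hs : x ∈ s <;> by_cases hp : p x <;> simp [indicator, hs, hp]

theorem rpow_le_add_tsum_ite {x a : ℝ≥0∞} (hx : x ≠ ∞) (ha : a ≠ 0) {s : ℝ} (hs : 0 ≤ s) :
    x ^ s ≤ a ^ s + ∑' j : ℕ, if 2 ^ j * a ≤ x then (2 ^ (j + 1) * a) ^ s else 0 := by
  rcases le_or_gt x a with hxa | hax
  · exact (ENNReal.rpow_le_rpow hxa hs).trans le_self_add
  obtain ⟨j, hj, hj'⟩ : ∃ j : ℕ, 2 ^ j * a ≤ x ∧ x < 2 ^ (j + 1) * a := by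
    lift x to NNReal using hx
    lift a to NNReal using (hax.trans ENNReal.coe_lt_top).ne
    have ha0 : 0 < a := pos_iff_ne_zero.mpr (by exact_mod_cast ha)
    obtain ⟨j, hj, hj'⟩ := exists_nat_pow_near
      ((one_le_div ha0).mpr (by exact_mod_cast hax.le)) one_lt_two
    rw [le_div_iff₀ ha0] at hj
    rw [div_lt_iff₀ ha0] at hj'
    exact ⟨j, by exact_mod_cast hj, by exact_mod_cast hj'⟩
  calc x ^ s ≤ (2 ^ (j + 1) * a) ^ s := ENNReal.rpow_le_rpow hj'.le hs
    _ = if 2 ^ j * a ≤ x then (2 ^ (j + 1) * a) ^ s else 0 := (if_pos hj).symm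
    _ ≤ ∑' j : ℕ, if 2 ^ j * a ≤ x then (2 ^ (j + 1) * a) ^ s else 0 := ENNReal.le_tsum j
    _ ≤ _ := le_add_self

theorem rpow_mul_le_add_tsum_mul_ite {x a : ℝ≥0∞} (hx : x ≠ ∞) (ha : a ≠ 0) {s : ℝ}
    (hs : 0 ≤ s) (v : ℝ≥0∞) :
    x ^ s * v ≤ a ^ s * v + ∑' j : ℕ, (2 ^ (j + 1) * a) ^ s * if 2 ^ j * a ≤ x then v else 0 := by
  calc x ^ s * v ≤ (a ^ s + ∑' j : ℕ, if 2 ^ j * a ≤ x then (2 ^ (j + 1) * a) ^ s else 0) * v := by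
        gcongr
        exact rpow_le_add_tsum_ite hx ha hs
    _ = _ := by
        rw [add_mul, ← ENNReal.tsum_mul_right]
        congr 2
        ext j
        split_ifs <;> simp

theorem two_pow_succ_mul_rpow {s : ℝ} (hs : 0 ≤ s) (j : ℕ) (a : ℝ≥0∞) :
    (2 ^ (j + 1) * a) ^ s = 2 ^ s * a ^ s * (2 ^ (s - 1)) ^ j * 2 ^ j := by
  have h2 : ∀ t u : ℝ, (2 : ℝ≥0∞) ^ (t + u) = 2 ^ t * 2 ^ u := fun t u =>
    ENNReal.rpow_add t u two_ne_zero ENNReal.ofNat_ne_top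
  calc (2 ^ (j + 1) * a) ^ s = 2 ^ (((j + 1 : ℕ) : ℝ) * s) * a ^ s := by
        rw [ENNReal.mul_rpow_of_nonneg _ _ hs, ENNReal.rpow_mul, ENNReal.rpow_natCast]
    _ = 2 ^ (s + (s - 1) * j + j) * a ^ s := by push_cast; ring_nf
    _ = _ := by rw [h2, h2, ENNReal.rpow_mul, ENNReal.rpow_natCast, ENNReal.rpow_natCast]; ring

theorem mul_le_rpow_mul_rpow_of_rpow_mul_le {a b c : ℝ≥0∞} {q : ℝ} (hq : 1 ≤ q)
    (h : b ^ q * a ≤ c) : b * a ≤ c ^ (1 / q) * a ^ (1 - 1 / q) := by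
  have hq0 : 0 < q := by linarith
  have h1 : 0 ≤ 1 / q := by positivity
  have h2 : 0 ≤ 1 - 1 / q := sub_nonneg.mpr ((div_le_one hq0).mpr hq)
  calc b * a = (b ^ q) ^ (1 / q) * (a ^ (1 / q) * a ^ (1 - 1 / q)) := by
        rw [← ENNReal.rpow_mul, ← ENNReal.rpow_add_of_nonneg _ _ h1 h2, mul_one_div_cancel hq0.ne',
          add_sub_cancel, ENNReal.rpow_one, ENNReal.rpow_one]
    _ = (b ^ q * a) ^ (1 / q) * a ^ (1 - 1 / q) := by
        rw [ENNReal.mul_rpow_of_nonneg _ _ h1, mul_assoc]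
    _ ≤ c ^ (1 / q) * a ^ (1 - 1 / q) := by gcongr

section Dyadic

variable {n : ℕ}

theorem mem_dyadicCube_iff {k : ℤ} {m : Fin n → ℤ} {x : Fin n → ℝ} :
    x ∈ dyadicCube n k m ↔ ∀ i, ⌊x i / 2 ^ k⌋ = m i := by
  have h2k : (0 : ℝ) < 2 ^ k := by positivity
  simp only [dyadicCube, mem_ofPred_eq, Int.floor_eq_iff, le_div_iff₀ h2k, div_lt_iff₀ h2k]

theorem floor_div_two_zpow_of_le {k k' : ℤ} (hk : k ≤ k') (r : ℝ) :
    ⌊r / 2 ^ k'⌋ = ⌊r / 2 ^ k⌋ / (2 ^ (k' - k).toNat : ℕ) := by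
  rw [← Int.floor_div_natCast, div_div, Nat.cast_pow, Nat.cast_ofNat, ← zpow_natCast,
    Int.toNat_of_nonneg (by omega), ← zpow_add₀ two_ne_zero, add_sub_cancel]

theorem dyadicCube_subset_of_le {k k' : ℤ} (hk : k ≤ k') {m m' : Fin n → ℤ} {x : Fin n → ℝ}
    (hx : x ∈ dyadicCube n k m) (hx' : x ∈ dyadicCube n k' m') :
    dyadicCube n k m ⊆ dyadicCube n k' m' := by
  rw [mem_dyadicCube_iff] at hx hx'
  intro y hy
  rw [mem_dyadicCube_iff] at hy ⊢
  intro i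
  rw [← hx' i, floor_div_two_zpow_of_le hk, floor_div_two_zpow_of_le hk, hx i, hy i]

theorem dyadicCube_eq_pi (k : ℤ) (m : Fin n → ℤ) :
    dyadicCube n k m = univ.pi fun i => Ico ((m i : ℝ) * 2 ^ k) ((m i + 1) * 2 ^ k) := by
  ext x
  simp [dyadicCube]

theorem volume_dyadicCube (k : ℤ) (m : Fin n → ℤ) :
    volume (dyadicCube n k m) = ENNReal.ofReal (2 ^ k) ^ n := by
  simp only [dyadicCube_eq_pi, volume_pi_pi, Real.volume_Ico, add_mul, one_mul,
    add_sub_cancel_left, Finset.prod_const, Finset.card_univ, Fintype.card_fin]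

theorem scale_le_of_dyadicCube_subset (hn : n ≠ 0) {k k' : ℤ} {m m' : Fin n → ℤ}
    (h : dyadicCube n k m ⊆ dyadicCube n k' m') : k ≤ k' := by
  have hvol := measure_mono (μ := volume) h
  rw [volume_dyadicCube, volume_dyadicCube, ENNReal.pow_le_pow_left_iff hn,
    ENNReal.ofReal_le_ofReal_iff (by positivity)] at hvol
  exact (zpow_le_zpow_iff_right₀ one_lt_two).mp hvol

namespace IsDyadicCube

variable {Q R : Set (Fin n → ℝ)}

theorem measurableSet (hQ : IsDyadicCube Q) : MeasurableSet Q := by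
  obtain ⟨k, m, rfl⟩ := hQ
  rw [dyadicCube_eq_pi]
  exact .univ_pi fun _ => measurableSet_Ico

theorem volume_ne_zero (hQ : IsDyadicCube Q) : volume Q ≠ 0 := by
  obtain ⟨k, m, rfl⟩ := hQ
  rw [volume_dyadicCube]
  exact pow_ne_zero _ (ENNReal.ofReal_pos.mpr (by positivity)).ne'

theorem volume_ne_top (hQ : IsDyadicCube Q) : volume Q ≠ ∞ := by
  obtain ⟨k, m, rfl⟩ := hQ
  rw [volume_dyadicCube]
  exact ENNReal.pow_ne_top ENNReal.ofReal_ne_top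

theorem mass_eq_avg_mul_volume (hQ : IsDyadicCube Q) (w : (Fin n → ℝ) → ℝ≥0∞) :
    mass w Q = avg w Q * volume Q :=
  (ENNReal.div_mul_cancel hQ.volume_ne_zero hQ.volume_ne_top).symm

theorem avg_mul_mass_le (hR : IsDyadicCube R) {w σ : (Fin n → ℝ) → ℝ≥0∞} {A c : ℝ≥0∞} {q : ℝ}
    (hq : 1 ≤ q) (hc : c ≠ 0) (hA : A ≠ ∞) (h : avg w R * avg σ R ^ q * c ≤ A) :
    avg σ R * mass w R ≤ (A * c⁻¹) ^ (1 / q) * (avg w R ^ (1 - 1 / q) * volume R) := by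
  have hprod : avg σ R ^ q * avg w R ≤ A * c⁻¹ := by
    rwa [← div_eq_mul_inv, ENNReal.le_div_iff_mul_le (.inl hc) (.inr hA), mul_comm (avg σ R ^ q)]
  rw [hR.mass_eq_avg_mul_volume, ← mul_assoc, ← mul_assoc]
  exact mul_le_mul_left (mul_le_rpow_mul_rpow_of_rpow_mul_le hq hprod) _

theorem nonempty (hQ : IsDyadicCube Q) : Q.Nonempty :=
  nonempty_of_measure_ne_zero hQ.volume_ne_zero

theorem subset_or_subset (hQ : IsDyadicCube Q) (hR : IsDyadicCube R) (h : ¬Disjoint Q R) :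
    Q ⊆ R ∨ R ⊆ Q := by
  obtain ⟨k, m, rfl⟩ := hQ
  obtain ⟨k', m', rfl⟩ := hR
  obtain ⟨x, hxQ, hxR⟩ := not_disjoint_iff.mp h
  rcases le_total k k' with hk | hk
  · exact .inl (dyadicCube_subset_of_le hk hxQ hxR)
  · exact .inr (dyadicCube_subset_of_le hk hxR hxQ)

theorem finite_setOf_between (hR : IsDyadicCube R) (hQ : IsDyadicCube Q) :
    {M | IsDyadicCube M ∧ R ⊆ M ∧ M ⊆ Q}.Finite := by
  rcases eq_or_ne n 0 with rfl | hn
  · refine (finite_singleton univ).subset fun M ⟨⟨k, m, hM⟩, _⟩ => ?_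
    simp [hM, dyadicCube]
  obtain ⟨kR, mR, rfl⟩ := hR
  obtain ⟨kQ, mQ, rfl⟩ := hQ
  obtain ⟨x, hx⟩ := IsDyadicCube.nonempty ⟨kR, mR, rfl⟩
  refine ((finite_Icc kR kQ).image fun k => dyadicCube n k fun i => ⌊x i / 2 ^ k⌋).subset ?_
  rintro _ ⟨⟨k, m, rfl⟩, hRM, hMQ⟩
  refine ⟨k, ⟨scale_le_of_dyadicCube_subset hn hRM, scale_le_of_dyadicCube_subset hn hMQ⟩, ?_⟩
  have hm := mem_dyadicCube_iff.mp (hRM hx)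
  simp only [hm]

end IsDyadicCube

end Dyadic

section Sparse

variable {n : ℕ} {Q : Set (Fin n → ℝ)}

theorem exists_subset_maximal_of_isDyadicCube {P : Set (Set (Fin n → ℝ))}
    (hP : ∀ M ∈ P, IsDyadicCube M ∧ M ⊆ Q) (hQ : IsDyadicCube Q) {R : Set (Fin n → ℝ)}
    (hR : R ∈ P) : ∃ B, R ⊆ B ∧ Maximal (· ∈ P) B := by
  have hfin : {M | M ∈ P ∧ R ⊆ M}.Finite :=
    ((hP R hR).1.finite_setOf_between hQ).subset
      fun M ⟨hM, hRM⟩ => ⟨(hP M hM).1, hRM, (hP M hM).2⟩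
  obtain ⟨B, hRB, hB⟩ := hfin.exists_le_maximal ⟨hR, subset_rfl⟩
  exact ⟨B, hRB, hB.1.1, fun M hM hBM => hB.2 ⟨hM, hRB.trans hBM⟩ hBM⟩

theorem pairwiseDisjoint_maximal_of_isDyadicCube {P : Set (Set (Fin n → ℝ))}
    (hP : ∀ M ∈ P, IsDyadicCube M) : {B | Maximal (· ∈ P) B}.PairwiseDisjoint id := by
  intro B hB B' hB' hne
  by_contra h
  rcases (hP B hB.1).subset_or_subset (hP B' hB'.1) h with hsub | hsub
  · exact hne (hB.eq_of_le hB'.1 hsub)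
  · exact hne (hB'.eq_of_le hB.1 hsub).symm

variable {η : ℝ≥0∞} {S : Set (Set (Fin n → ℝ))}

theorem IsSparse.mul_tsum_volume_le (hS : IsSparse η S) (B : Set (Fin n → ℝ)) :
    η * ∑' R : {R | R ∈ S ∧ R ⊆ B}, volume (R : Set (Fin n → ℝ)) ≤ volume B := by
  obtain ⟨-, E, hE, hEd⟩ := hS
  rw [← ENNReal.tsum_mul_left]
  calc ∑' R : {R | R ∈ S ∧ R ⊆ B}, η * volume (R : Set (Fin n → ℝ))
      ≤ ∑' R : {R | R ∈ S ∧ R ⊆ B}, volume (E R) :=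
        ENNReal.tsum_le_tsum fun R => (hE R R.2.1).2.2
    _ ≤ volume B :=
        tsum_measure_le_of_pairwiseDisjoint volume (hEd.subset fun R hR => hR.1)
          (fun R hR => (hE R hR.1).2.1) fun R hR => (hE R hR.1).1.trans hR.2

theorem IsSparse.mul_mul_tsum_ite_volume_le_mass (hS : IsSparse η S) (hQ : Q ∈ S)
    (w : (Fin n → ℝ) → ℝ≥0∞) (lam : ℝ≥0∞) :
    η * lam * ∑' R : {R | R ∈ S ∧ R ⊆ Q},
        (if lam ≤ avg w R then volume (R : Set (Fin n → ℝ)) else 0) ≤ mass w Q := by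
  rw [tsum_subtype_ite _ (fun R => lam ≤ avg w R) volume]
  set P := {R | R ∈ {R | R ∈ S ∧ R ⊆ Q} ∧ lam ≤ avg w R}
  set Pmax := {B | Maximal (· ∈ P) B}
  have hdy := hS.1
  have hcover : P ⊆ ⋃ B ∈ Pmax, {R | R ∈ S ∧ R ⊆ B} := fun R hR => by
    obtain ⟨B, hRB, hB⟩ :=
      exists_subset_maximal_of_isDyadicCube (fun M hM => ⟨hdy M hM.1.1, hM.1.2⟩) (hdy Q hQ) hR
    exact mem_biUnion hB ⟨hR.1.1, hRB⟩
  have hmass : ∀ B ∈ Pmax, lam * volume B ≤ mass w B := fun B hB =>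
    (ENNReal.le_div_iff_mul_le (.inl (hdy B hB.1.1.1).volume_ne_zero)
      (.inl (hdy B hB.1.1.1).volume_ne_top)).mp hB.1.2
  calc η * lam * ∑' R : P, volume (R : Set (Fin n → ℝ))
      ≤ η * lam * ∑' B : Pmax, ∑' R : {R | R ∈ S ∧ R ⊆ B}, volume (R : Set (Fin n → ℝ)) := by
        gcongr
        exact (ENNReal.tsum_mono_subtype _ hcover).trans (ENNReal.tsum_biUnion_le_tsum _ _ _)
    _ = ∑' B : Pmax, lam * (η * ∑' R : {R | R ∈ S ∧ R ⊆ B}, volume (R : Set (Fin n → ℝ))) := by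
        rw [← ENNReal.tsum_mul_left]
        congr 1
        ext B
        ring
    _ ≤ ∑' B : Pmax, mass w B :=
        ENNReal.tsum_le_tsum fun B => (mul_le_mul_right (hS.mul_tsum_volume_le B) _).trans
          (hmass B B.2)
    _ = ∑' B : Pmax, volume.withDensity w B := by simp only [withDensity_apply', mass]
    _ ≤ volume.withDensity w Q :=
        tsum_measure_le_of_pairwiseDisjoint _
          (pairwiseDisjoint_maximal_of_isDyadicCube fun M hM => hdy M hM.1.1)
          (fun B hB => (hdy B hB.1.1.1).measurableSet) fun B hB => hB.1.1.2
    _ = mass w Q := withDensity_apply' _ _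

theorem IsSparse.rpow_mul_mul_tsum_ite_volume_le (hS : IsSparse η S) (hQ : Q ∈ S)
    {w : (Fin n → ℝ) → ℝ≥0∞} (ha0 : avg w Q ≠ 0) (hwQ : avg w Q ≠ ∞) {s : ℝ} (hs0 : 0 ≤ s)
    (j : ℕ) :
    (2 ^ (j + 1) * avg w Q) ^ s * (η * ∑' R : {R | R ∈ S ∧ R ⊆ Q},
        if 2 ^ j * avg w Q ≤ avg w R then volume (R : Set (Fin n → ℝ)) else 0)
      ≤ 2 ^ s * avg w Q ^ s * volume Q * (2 ^ (s - 1)) ^ j := by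
  set L := ∑' R : {R | R ∈ S ∧ R ⊆ Q},
    if 2 ^ j * avg w Q ≤ avg w R then volume (R : Set (Fin n → ℝ)) else 0
  have hL : 2 ^ j * (η * L) ≤ volume Q := by
    rw [← ENNReal.mul_le_mul_iff_right ha0 hwQ, ← (hS.1 Q hQ).mass_eq_avg_mul_volume]
    calc avg w Q * (2 ^ j * (η * L)) = η * (2 ^ j * avg w Q) * L := by ring
      _ ≤ mass w Q := hS.mul_mul_tsum_ite_volume_le_mass hQ w _
  calc (2 ^ (j + 1) * avg w Q) ^ s * (η * L)
      = 2 ^ s * avg w Q ^ s * (2 ^ (s - 1)) ^ j * (2 ^ j * (η * L)) := by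
        rw [two_pow_succ_mul_rpow hs0]; ring
    _ ≤ 2 ^ s * avg w Q ^ s * (2 ^ (s - 1)) ^ j * volume Q := by gcongr
    _ = 2 ^ s * avg w Q ^ s * volume Q * (2 ^ (s - 1)) ^ j := by ring

theorem IsSparse.mul_tsum_avg_rpow_mul_volume_le (hS : IsSparse η S) (hQ : Q ∈ S)
    {w : (Fin n → ℝ) → ℝ≥0∞} (hwQ : avg w Q ≠ ∞) {s : ℝ} (hs0 : 0 ≤ s) :
    η * ∑' R : {R | R ∈ S ∧ R ⊆ Q}, avg w R ^ s * volume (R : Set (Fin n → ℝ))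
      ≤ (1 + 2 ^ s * (1 - 2 ^ (s - 1))⁻¹) * avg w Q ^ s * volume Q := by
  set a := avg w Q
  have hmass : ∀ R ∈ {R | R ∈ S ∧ R ⊆ Q}, mass w R ≤ a * volume Q := fun R hR =>
    (hS.1 Q hQ).mass_eq_avg_mul_volume w ▸ lintegral_mono_set hR.2
  rcases eq_or_ne a 0 with ha0 | ha0
  · have hR : ∀ R : {R | R ∈ S ∧ R ⊆ Q}, avg w R ^ s = a ^ s := fun R => by
      have h0 : mass w R = 0 := by simpa [ha0] using hmass R R.2
      rw [ha0, avg, h0, ENNReal.zero_div]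
    simp only [hR, ENNReal.tsum_mul_left]
    calc η * (a ^ s * ∑' R : {R | R ∈ S ∧ R ⊆ Q}, volume (R : Set (Fin n → ℝ)))
        = a ^ s * (η * ∑' R : {R | R ∈ S ∧ R ⊆ Q}, volume (R : Set (Fin n → ℝ))) := by ring
      _ ≤ 1 * a ^ s * volume Q := by rw [one_mul]; gcongr; exact hS.mul_tsum_volume_le Q
      _ ≤ _ := by gcongr; exact le_self_add
  have hfin : ∀ R : {R | R ∈ S ∧ R ⊆ Q}, avg w R ≠ ∞ := fun R =>
    (ENNReal.div_lt_top (ne_top_of_le_ne_top (ENNReal.mul_ne_top hwQ (hS.1 Q hQ).volume_ne_top)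
      (hmass R R.2)) (hS.1 R R.2.1).volume_ne_zero).ne
  calc η * ∑' R : {R | R ∈ S ∧ R ⊆ Q}, avg w R ^ s * volume (R : Set (Fin n → ℝ))
      ≤ η * ∑' R : {R | R ∈ S ∧ R ⊆ Q}, (a ^ s * volume (R : Set (Fin n → ℝ)) +
          ∑' j : ℕ, (2 ^ (j + 1) * a) ^ s *
            (if 2 ^ j * a ≤ avg w R then volume (R : Set (Fin n → ℝ)) else 0)) := by
        gcongr with R
        exact rpow_mul_le_add_tsum_mul_ite (hfin R) ha0 hs0 _
    _ = a ^ s * (η * ∑' R : {R | R ∈ S ∧ R ⊆ Q}, volume (R : Set (Fin n → ℝ))) +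
          ∑' j : ℕ, (2 ^ (j + 1) * a) ^ s * (η * ∑' R : {R | R ∈ S ∧ R ⊆ Q},
            if 2 ^ j * a ≤ avg w R then volume (R : Set (Fin n → ℝ)) else 0) := by
        simp only [ENNReal.tsum_add, ENNReal.tsum_mul_left]
        rw [ENNReal.tsum_comm]
        simp only [ENNReal.tsum_mul_left]
        rw [mul_add]
        congr 1
        · ring
        · rw [← ENNReal.tsum_mul_left]
          exact tsum_congr fun j => by ring
    _ ≤ a ^ s * volume Q + ∑' j : ℕ, 2 ^ s * a ^ s * volume Q * (2 ^ (s - 1)) ^ j :=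
        add_le_add (mul_le_mul_right (hS.mul_tsum_volume_le Q) _)
          (ENNReal.tsum_le_tsum (hS.rpow_mul_mul_tsum_ite_volume_le hQ ha0 hwQ hs0))
    _ = (1 + 2 ^ s * (1 - 2 ^ (s - 1))⁻¹) * a ^ s * volume Q := by
        rw [ENNReal.tsum_mul_left, ENNReal.tsum_geometric]
        ring

end Sparse

theorem statement13 (eta : ℝ≥0∞) (heta0 : 0 < eta) (heta1 : eta ≤ 1) (p : ℝ)
    (hp : 2 ≤ p) (n : ℕ) :
    ∃ C : ℝ≥0∞, C < ∞ ∧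
      ∀ (w σ : (Fin n → ℝ) → ℝ≥0∞), Measurable w → Measurable σ →
      ∀ (S : Set (Set (Fin n → ℝ))), IsSparse eta S →
      (∀ Q' ∈ S, 1 ≤ avg σ Q') →
      ∀ (ψ : ℝ≥0∞ → ℝ≥0∞), MonotoneOn ψ (Set.Ici 1) → (∀ t, 0 < ψ t) →
      (∫⁻ t in Set.Ioi (1:ℝ), (ENNReal.ofReal t * ψ (ENNReal.ofReal t))⁻¹) < ∞ →
      (⨆ (Q' : Set (Fin n → ℝ)) (_ : Q' ∈ S),
          avg w Q' * (avg σ Q') ^ (p-1) * ψ (avg σ Q')) < ∞ →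
      ∀ Q ∈ S,
      ∑' Q' : {Q' : Set (Fin n → ℝ) // Q' ∈ S ∧ Q' ⊆ Q ∧
          (avg σ Q) ^ ((2:ℝ)⁻¹) < avg σ Q'},
        avg σ Q'.1 * mass w Q'.1
      ≤ C * (⨆ (Q' : Set (Fin n → ℝ)) (_ : Q' ∈ S),
            avg w Q' * (avg σ Q') ^ (p-1) * ψ (avg σ Q')) ^ (1/(p-1)) *
          (ψ ((avg σ Q) ^ ((2:ℝ)⁻¹)))⁻¹ ^ (1/(p-1)) *
          (avg w Q) ^ (1 - 1/(p-1)) * volume Q := by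
  have hp1 : 1 ≤ p - 1 := by linarith
  set s : ℝ := 1 - 1 / (p - 1)
  have hs0 : 0 ≤ s := sub_nonneg.mpr ((div_le_one (by linarith)).mpr hp1)
  have hs1 : (2 : ℝ≥0∞) ^ (s - 1) < 1 :=
    ENNReal.rpow_lt_one_of_one_lt_of_neg ENNReal.one_lt_two
      (by linarith [one_div_pos.mpr (show 0 < p - 1 by linarith)])
  refine ⟨eta⁻¹ * (1 + 2 ^ s * (1 - 2 ^ (s - 1))⁻¹), ?_, ?_⟩
  · have := tsub_pos_of_lt hs1
    finiteness
  intro w σ _ _ S hS hσ ψ hψ hψpos _ hA Q hQ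
  set A := ⨆ (Q' : Set (Fin n → ℝ)) (_ : Q' ∈ S), avg w Q' * avg σ Q' ^ (p - 1) * ψ (avg σ Q')
  set ψ₀ := ψ (avg σ Q ^ (2 : ℝ)⁻¹)
  have hAle : ∀ R ∈ S, avg w R * avg σ R ^ (p - 1) * ψ (avg σ R) ≤ A := fun R hR =>
    le_iSup₂ (f := fun R (_ : R ∈ S) => avg w R * avg σ R ^ (p - 1) * ψ (avg σ R)) R hR
  have hwQ : avg w Q ≠ ∞ :=
    (ENNReal.lt_top_of_mul_ne_top_left (ENNReal.lt_top_of_mul_ne_top_left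
      (ne_top_of_le_ne_top hA.ne (hAle Q hQ)) (hψpos _).ne').ne
      (zero_lt_one.trans_le (ENNReal.one_le_rpow (hσ Q hQ) (by linarith))).ne').ne
  have hcube : ∀ R ∈ S, avg σ Q ^ (2 : ℝ)⁻¹ < avg σ R →
      avg σ R * mass w R ≤ (A * ψ₀⁻¹) ^ (1 / (p - 1)) * (avg w R ^ s * volume R) :=
    fun R hR hσR => (hS.1 R hR).avg_mul_mass_le hp1 (hψpos _).ne' hA.ne <|
      (mul_le_mul_right (hψ (ENNReal.one_le_rpow (hσ Q hQ) (by norm_num)) (hσ R hR) hσR.le) _).trans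
        (hAle R hR)
  calc ∑' R : {R : Set (Fin n → ℝ) // R ∈ S ∧ R ⊆ Q ∧ avg σ Q ^ (2 : ℝ)⁻¹ < avg σ R},
        avg σ R.1 * mass w R.1
      ≤ (A * ψ₀⁻¹) ^ (1 / (p - 1)) * ∑' R : {R | R ∈ S ∧ R ⊆ Q ∧ avg σ Q ^ (2 : ℝ)⁻¹ < avg σ R},
          avg w R ^ s * volume (R : Set (Fin n → ℝ)) := by
        rw [← ENNReal.tsum_mul_left]
        exact ENNReal.tsum_le_tsum fun R => hcube R R.2.1 R.2.2.2
    _ ≤ (A * ψ₀⁻¹) ^ (1 / (p - 1)) * ∑' R : {R | R ∈ S ∧ R ⊆ Q},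
          avg w R ^ s * volume (R : Set (Fin n → ℝ)) := by
        gcongr 1
        exact ENNReal.tsum_mono_subtype (fun R => avg w R ^ s * volume R) fun R hR => ⟨hR.1, hR.2.1⟩
    _ ≤ (A * ψ₀⁻¹) ^ (1 / (p - 1)) *
          (eta⁻¹ * ((1 + 2 ^ s * (1 - 2 ^ (s - 1))⁻¹) * avg w Q ^ s * volume Q)) := by
        gcongr 1
        exact (ENNReal.mul_le_iff_le_inv heta0.ne' (heta1.trans_lt ENNReal.one_lt_top).ne).mp
          (hS.mul_tsum_avg_rpow_mul_volume_le hQ hwQ hs0)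
    _ = _ := by
        rw [ENNReal.mul_rpow_of_nonneg _ _ (by positivity)]
        ring
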